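/- For any formal group law F over a commutative Q-algebra R, there exists a unique power series f(x) ∈ R[[x]] with f(0)=0 and f'(0)=1 such that f(F(x,y)) = f(x) + f(y). This f is called the logarithm of F. -/

import Mathlib

open scoped Classical
noncomputable section


/-! ### Substitution machinery for (multivariable) formal power series -/

variable {R : Type*} [CommRing R] {σ : Type*}

/-- Build a multivariate power series from its coefficient function. -/
def mvmk (f : (σ →₀ ℕ) → R) : MvPowerSeries σ R := f

/-- Total degree of a monomial exponent. -/
def wt (d : σ →₀ ℕ) : ℕ := d.sum fun _ n => n

/-- Substitution `f(u)` of a multivariate series `u` with zero constant term into a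
one-variable power series `f`. -/
def pcompMv (f : PowerSeries R) (u : MvPowerSeries σ R) : MvPowerSeries σ R :=
  mvmk fun d => MvPowerSeries.coeff d
    (∑ k ∈ Finset.range (wt d + 1), MvPowerSeries.C (PowerSeries.coeff k f) * u ^ k)

/-- Composition `f(g)` of one-variable power series, for `g` with zero constant term. -/
def pcomp (f g : PowerSeries R) : PowerSeries R :=
  PowerSeries.mk fun n => PowerSeries.coeff n
    (∑ k ∈ Finset.range (n + 1), PowerSeries.C (PowerSeries.coeff k f) * g ^ k)

/-- Substitution `F(a,b)` of two series with zero constant term into a two-variable series. -/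
def subst2 (F : MvPowerSeries (Fin 2) R) (a b : MvPowerSeries σ R) : MvPowerSeries σ R :=
  mvmk fun d => MvPowerSeries.coeff d
    (∑ p ∈ Finset.range (wt d + 1) ×ˢ Finset.range (wt d + 1),
      MvPowerSeries.C
          (MvPowerSeries.coeff (Finsupp.single (0 : Fin 2) p.1 + Finsupp.single (1 : Fin 2) p.2) F)
        * a ^ p.1 * b ^ p.2)

/-- The one-variable power series `f` viewed in variable `i` of a two-variable ring. -/
def toMv (i : Fin 2) (f : PowerSeries R) : MvPowerSeries (Fin 2) R :=
  mvmk fun d => if d = Finsupp.single i (d i) then PowerSeries.coeff (d i) f else 0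

/-- `F` is a one-dimensional formal group law: `F(x,0)=x`, `F(0,y)=y`,
`F(x,F(y,z))=F(F(x,y),z)`. -/
def IsFGL (F : MvPowerSeries (Fin 2) R) : Prop :=
  subst2 F (MvPowerSeries.X 0) 0 = (MvPowerSeries.X 0 : MvPowerSeries (Fin 2) R) ∧
  subst2 F 0 (MvPowerSeries.X 1) = (MvPowerSeries.X 1 : MvPowerSeries (Fin 2) R) ∧
  subst2 F (MvPowerSeries.X 0) (subst2 F (MvPowerSeries.X 1) (MvPowerSeries.X 2)) =
    subst2 F (subst2 F (MvPowerSeries.X 0) (MvPowerSeries.X 1))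
      (MvPowerSeries.X 2 : MvPowerSeries (Fin 3) R)

/-! ### Laurent series machinery -/

/-- The Laurent series variable `x`. -/
def xL : LaurentSeries ℂ := HahnSeries.single 1 1

theorem isPWO_Ici (a : ℤ) : (Set.Ici a).IsPWO := by
  have h : Set.Ici a = (fun n : ℕ => a + n) '' Set.univ := by
    ext n
    simp only [Set.mem_Ici, Set.mem_image, Set.mem_univ, true_and]
    constructor
    · intro h; exact ⟨(n - a).toNat, by omega⟩
    · rintro ⟨m, rfl⟩; omega
  rw [h]
  exact ((Set.isWF_univ_iff.2 ⟨wellFounded_lt⟩).isPWO).image_of_monotone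
    (fun x y hxy => by omega)

/-- Substitution `c(g)` of a Laurent series `g` of order one into a Laurent series `c`,
defined coefficientwise (using `zpow` in the field of Laurent series). -/
def lsubst (g c : LaurentSeries ℂ) : LaurentSeries ℂ :=
  { coeff := fun a => ∑ m ∈ Finset.Icc c.order a, c.coeff m * (g ^ m).coeff a
    isPWO_support' := (isPWO_Ici c.order).mono (by
      intro a ha
      simp only [Function.mem_support] at ha
      by_contra hc
      simp only [Set.mem_Ici, not_le] at hc
      rw [Finset.Icc_eq_empty (by omega), Finset.sum_empty] at ha
      exact ha rfl) }

/-- Formal derivative `d/dx` of a Laurent series. -/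
def lderiv (c : LaurentSeries ℂ) : LaurentSeries ℂ :=
  { coeff := fun a => (a + 1 : ℤ) • c.coeff (a + 1)
    isPWO_support' := (c.isPWO_support.image_of_monotone
        (f := fun m => m - 1) (fun x y h => by dsimp only; omega)).mono (by
      intro a ha
      simp only [Function.mem_support] at ha
      refine ⟨a + 1, ?_, by ring⟩
      intro h0
      exact ha (by rw [h0, smul_zero])) }

/-- `j`-th Hasse derivative `(1/j!) (d/dx)^j` of a Laurent series. -/
def hasse (j : ℕ) (c : LaurentSeries ℂ) : LaurentSeries ℂ := ((Nat.factorial j : ℂ))⁻¹ • lderiv^[j] c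

/-- Taylor-expansion substitution `φ(ψ, w)`: substitute `ψ` (whose constant term in the
`z`-variables is `x`) for `x` and `w` (zero constant term) for `z` in
`φ(x,z) = Σ c_n(x) zⁿ`, via `c_n(ψ) = Σ_j (hasse_j c_n)(x) (ψ - x)^j`. -/
def fullComp (φ : PowerSeries (LaurentSeries ℂ)) (ψ w : MvPowerSeries (Fin 2) (LaurentSeries ℂ)) :
    MvPowerSeries (Fin 2) (LaurentSeries ℂ) :=
  mvmk fun d => MvPowerSeries.coeff d
    (∑ n ∈ Finset.range (wt d + 1), ∑ j ∈ Finset.range (wt d + 1),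
      MvPowerSeries.C (hasse j (PowerSeries.coeff n φ))
        * (ψ - MvPowerSeries.C xL) ^ j * w ^ n)

/-- `φ(x,z) ∈ ℂ((x))[[z]]` is an associate of the formal group law `F`:
`φ(x,0) = x` and `φ(φ(x,z₁),z₂) = φ(x,F(z₁,z₂))`. -/
def IsAssoc (F : MvPowerSeries (Fin 2) ℂ) (φ : PowerSeries (LaurentSeries ℂ)) : Prop :=
  PowerSeries.constantCoeff φ = xL ∧
  fullComp φ (toMv 0 φ) (MvPowerSeries.X 1) =
    fullComp φ (MvPowerSeries.C xL)
      (MvPowerSeries.map (HahnSeries.C : ℂ →+* LaurentSeries ℂ) F)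

/-- Application of a one-variable series `c` (as a Laurent series) to
`ψ ∈ ℂ((x))[[z]]` whose constant term is the base point `w`, by Taylor expansion at `w`. -/
def acompAt (c w : LaurentSeries ℂ) (ψ : PowerSeries (LaurentSeries ℂ)) :
    PowerSeries (LaurentSeries ℂ) :=
  PowerSeries.mk fun n => PowerSeries.coeff n
    (∑ j ∈ Finset.range (n + 1),
      PowerSeries.C (lsubst w (hasse j c)) *
        (ψ - PowerSeries.C w) ^ j)




/-! ### Vertex-algebra machinery -/

/-- `F(x₀,x₂)` viewed in `ℂ((x₀))[[x₂]]`. -/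
def FB (F : MvPowerSeries (Fin 2) ℂ) : PowerSeries (LaurentSeries ℂ) :=
  PowerSeries.mk fun j => HahnSeries.ofPowerSeries ℤ ℂ
    (PowerSeries.mk fun i =>
      MvPowerSeries.coeff (Finsupp.single (0 : Fin 2) i + Finsupp.single (1 : Fin 2) j) F)

/-- Integer power `F(x₀,x₂)^k` computed in `ℂ((x₀))[[x₂]]` (negative powers via
`Ring.inverse`, which is the genuine inverse whenever `F(x,0)=x`). -/
def Fzp (F : MvPowerSeries (Fin 2) ℂ) (k : ℤ) : PowerSeries (LaurentSeries ℂ) :=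
  if 0 ≤ k then (FB F) ^ k.toNat else (Ring.inverse (FB F)) ^ (-k).toNat

/-- The coefficient of `x₀^a x₂^c` in `F(x₀,x₂)^k ∈ ℂ((x₀))[[x₂]]`. -/
def FzC (F : MvPowerSeries (Fin 2) ℂ) (k : ℤ) (a c : ℤ) : ℂ :=
  if 0 ≤ c then (PowerSeries.coeff c.toNat (Fzp F k)).coeff a else 0

variable {V : Type*} [AddCommGroup V] [Module ℂ V]

/-- Vacuum property: `Y(𝟙,x)v = v`. -/
def Vacuum (Y : V → V → HahnSeries ℤ V) (vac : V) : Prop :=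
  ∀ v, Y vac v = HahnSeries.single 0 v

/-- Creation property: `Y(v,x)𝟙 ∈ V[[x]]` with constant term `v`.
(Here `(Y u v).coeff a` is the coefficient of `x^a` in `Y(u,x)v`.) -/
def Creation (Y : V → V → HahnSeries ℤ V) (vac : V) : Prop :=
  ∀ v, (∀ n : ℤ, n < 0 → (Y v vac).coeff n = 0) ∧ (Y v vac).coeff 0 = v

/-- Weak `F`-associativity: for all `u,v,w` there is `l` with
`F(x₀,x₂)^l Y(u,F(x₀,x₂))Y(v,x₂)w = F(x₀,x₂)^l Y(Y(u,x₀)v,x₂)w`,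
expressed through coefficients of `x₀^a x₂^b`. -/
def WeakFAssoc (F : MvPowerSeries (Fin 2) ℂ) (Y : V → V → HahnSeries ℤ V) : Prop :=
  ∀ u v w : V, ∃ l : ℕ, ∀ a b : ℤ,
    (∑ᶠ mn : ℤ × ℤ, FzC F ((l : ℤ) + mn.1) a (b - mn.2) • (Y u ((Y v w).coeff mn.2)).coeff mn.1)
    = ∑ᶠ mn : ℤ × ℤ, FzC F (l : ℤ) (a - mn.1) (b - mn.2) • (Y ((Y u v).coeff mn.1) w).coeff mn.2

/-- Weak commutativity: for all `u,v` there is `k` with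
`(x₁-x₂)^k Y(u,x₁)Y(v,x₂) = (x₁-x₂)^k Y(v,x₂)Y(u,x₁)`, in coefficients of `x₁^a x₂^b`. -/
def WeakComm (Y : V → V → HahnSeries ℤ V) : Prop :=
  ∀ u v : V, ∃ k : ℕ, ∀ (w : V) (a b : ℤ),
    (∑ i ∈ Finset.range (k + 1),
      ((-1 : ℂ) ^ (k - i) * (k.choose i : ℂ)) •
        (Y u ((Y v w).coeff (b - (k - i)))).coeff (a - i))
    = ∑ i ∈ Finset.range (k + 1),
      ((-1 : ℂ) ^ (k - i) * (k.choose i : ℂ)) •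
        (Y v ((Y u w).coeff (a - i))).coeff (b - (k - i))

/-! ### Products of fields in two variables (for Lemma on `g(x₁)-g(x₂)`) -/

variable {W : Type*} [AddCommGroup W] [Module ℂ W]

/-- Coefficient of `x₁^m x₂^n` in `q(x₁,x₂)·a(x₁)b(x₂)w`. -/
def prodCoeff (q : MvPowerSeries (Fin 2) ℂ) (a b : W →ₗ[ℂ] HahnSeries ℤ W) (w : W)
    (m n : ℤ) : W :=
  ∑ᶠ ij : ℕ × ℕ,
    MvPowerSeries.coeff (Finsupp.single (0 : Fin 2) ij.1 + Finsupp.single (1 : Fin 2) ij.2) q •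
      (a ((b w).coeff (n - ij.2))).coeff (m - ij.1)

/-- Coefficient of `x₁^m x₂^n` in `q(x₁,x₂)·b(x₂)a(x₁)w`. -/
def prodCoeff' (q : MvPowerSeries (Fin 2) ℂ) (a b : W →ₗ[ℂ] HahnSeries ℤ W) (w : W)
    (m n : ℤ) : W :=
  ∑ᶠ ij : ℕ × ℕ,
    MvPowerSeries.coeff (Finsupp.single (0 : Fin 2) ij.1 + Finsupp.single (1 : Fin 2) ij.2) q •
      (b ((a w).coeff (m - ij.1))).coeff (n - ij.2)

/-- Membership in `Hom(W, W((x₁,x₂)))` for the two-variable coefficient family. -/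
def MemHom2 (q : MvPowerSeries (Fin 2) ℂ) (a b : W →ₗ[ℂ] HahnSeries ℤ W) : Prop :=
  ∀ w : W, ∃ N : ℕ, ∀ m n : ℤ, (m < -(N : ℤ) ∨ n < -(N : ℤ)) → prodCoeff q a b w m n = 0

/-!
Let `v(t) = F_x(0, t)`, a unit because `F(x, 0) = x`. Differentiating associativity
`F(u, F(x, y)) = F(F(u, x), y)` in `u` at `u = 0` gives `v(F(x, y)) = F_x(x, y) v(x)`, so by the
chain rule `f = ∫ v⁻¹` satisfies `∂ₓ f(F(x, y)) = v(x)⁻¹ = ∂ₓ (f(x) + f(y))`. Both sides also agree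
at `x = 0`, where `F(0, y) = y`; over a `ℚ`-algebra this forces `f(F(x, y)) = f(x) + f(y)`.
Conversely, differentiating `g(F(x, y)) = g(x) + g(y)` in `x` at `x = 0` gives `g' v = g'(0)`, so
`g' = v⁻¹` when `g'(0) = 1`, and then `g = f` when also `g(0) = 0`.
-/

theorem Pi.single_zero_fin2 {M : Type*} [Zero M] (b : M) : Pi.single (0 : Fin 2) b = ![b, 0] := by
  funext s; fin_cases s <;> rfl

theorem Pi.single_one_fin2 {M : Type*} [Zero M] (b : M) : Pi.single (1 : Fin 2) b = ![0, b] := by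
  funext s; fin_cases s <;> rfl

theorem Derivation.map_mvPolynomial_aeval [Fintype σ] {A : Type*} [CommRing A] [Algebra R A]
    (D : Derivation R A A) (a : σ → A) (p : MvPolynomial σ R) :
    D (MvPolynomial.aeval a p) = ∑ s, MvPolynomial.aeval a (MvPolynomial.pderiv s p) * D (a s) := by
  induction p using MvPolynomial.induction_on with
  | C r => simp
  | add p q hp hq => simp [hp, hq, add_mul, Finset.sum_add_distrib]
  | mul_X p k hp =>
    simp only [map_mul, MvPolynomial.aeval_X, Derivation.leibniz, hp, smul_eq_mul,
      MvPolynomial.pderiv_X, map_add]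
    simp [Pi.single_apply, add_mul, Finset.sum_add_distrib, Finset.mul_sum, mul_assoc]

namespace MvPowerSeries

variable {τ : Type*}

theorem hasSubst_fin2 {A B : MvPowerSeries σ R} (hA : constantCoeff A = 0)
    (hB : constantCoeff B = 0) : HasSubst ![A, B] :=
  hasSubst_of_constantCoeff_zero (Fin.forall_fin_two.2 ⟨hA, hB⟩)

theorem coeff_pow_mul_pow_eq_zero {A B : MvPowerSeries σ R} (hA : constantCoeff A = 0)
    (hB : constantCoeff B = 0) {d : σ →₀ ℕ} {i j : ℕ} (h : d.degree < i + j) :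
    coeff d (A ^ i * B ^ j) = 0 := by
  apply coeff_of_lt_order
  calc (d.degree : ℕ∞) < ((i + j : ℕ) : ℕ∞) := by exact_mod_cast h
    _ = i + j := Nat.cast_add i j
    _ ≤ (A ^ i).order + (B ^ j).order := add_le_add
        (le_order_pow_of_constantCoeff_eq_zero i hA) (le_order_pow_of_constantCoeff_eq_zero j hB)
    _ ≤ _ := le_order_mul

theorem le_order_subst_of_le [Finite σ] {a : σ → MvPowerSeries τ R}
    (ha : ∀ s, constantCoeff (a s) = 0) {H : MvPowerSeries σ R} {n : ℕ∞} (h : n ≤ H.order) :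
    n ≤ (subst a H).order := by
  refine le_trans ?_ (le_order_subst (hasSubst_of_constantCoeff_zero ha) H)
  have : 1 ≤ ⨅ s, (a s).order := le_iInf fun s => by
    rw [Order.one_le_iff_ne_zero, order_ne_zero_iff_constCoeff_eq_zero]
    exact ha s
  calc n ≤ 1 * H.order := by rwa [one_mul]
    _ ≤ _ := mul_le_mul_left this _

theorem le_order_pderiv (i : σ) {H : MvPowerSeries σ R} {n : ℕ}
    (h : ((n + 1 : ℕ) : ℕ∞) ≤ H.order) : (n : ℕ∞) ≤ (pderiv R i H).order := by
  refine le_order fun d hd => ?_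
  rw [coeff_pderiv, coeff_of_lt_order, zero_mul]
  refine lt_of_lt_of_le ?_ h
  rw [map_add, Finsupp.degree_single]
  exact_mod_cast Nat.add_lt_add_right (by exact_mod_cast hd) 1

theorem le_order_sub_truncTotal [Finite σ] (H : MvPowerSeries σ R) (n : ℕ) :
    (n : ℕ∞) ≤ (H - truncTotal n H).order :=
  le_order fun d hd => by
    rw [map_sub, MvPolynomial.coeff_coe, coeff_truncTotal _ (by exact_mod_cast hd), sub_self]

theorem pderiv_subst [Fintype σ] {a : σ → MvPowerSeries τ R} (ha : ∀ s, constantCoeff (a s) = 0)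
    (G : MvPowerSeries σ R) (i : τ) :
    pderiv R i (subst a G) = ∑ s, subst a (pderiv R s G) * pderiv R i (a s) := by
  have hsub := hasSubst_of_constantCoeff_zero ha
  ext d
  set n := d.degree + 1
  set P : MvPowerSeries σ R := (truncTotal (n + 1) G).toMvPowerSeries
  -- Replacing `G` by its truncation `P` changes neither side at `d`, and for the polynomial `P`
  -- the chain rule is `Derivation.map_mvPolynomial_aeval`.
  have hP : pderiv R i (subst a P) = ∑ s, subst a (pderiv R s P) * pderiv R i (a s) := by
    simp only [P, subst_coe, pderiv_coe, Derivation.map_mvPolynomial_aeval]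
  have hGP : ((n + 1 : ℕ) : ℕ∞) ≤ (G - P).order := le_order_sub_truncTotal G (n + 1)
  have hlt : (d.degree : ℕ∞) < n := by exact_mod_cast Nat.lt_succ_self _
  have h1 : coeff d (pderiv R i (subst a (G - P))) = 0 :=
    coeff_of_lt_order (hlt.trans_le (le_order_pderiv i (le_order_subst_of_le ha hGP)))
  have h2 : ∀ s, coeff d (subst a (pderiv R s (G - P)) * pderiv R i (a s)) = 0 := fun s =>
    coeff_of_lt_order <| hlt.trans_le <| (le_order_subst_of_le ha (le_order_pderiv s hGP)).trans
      (le_self_add.trans le_order_mul)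
  have e1 : subst a G = subst a P + subst a (G - P) := by rw [← subst_add hsub, add_sub_cancel]
  have e2 : ∀ s, subst a (pderiv R s G) = subst a (pderiv R s P) + subst a (pderiv R s (G - P)) :=
    fun s => by rw [← subst_add hsub, ← map_add, add_sub_cancel]
  rw [e1, map_add, map_add, hP, h1, add_zero]
  simp only [e2, add_mul, Finset.sum_add_distrib, map_add, map_sum, h2, Finset.sum_const_zero,
    add_zero]

theorem pderiv_powerSeriesSubst {u : MvPowerSeries σ R} (hu : constantCoeff u = 0)
    (f : PowerSeries R) (i : σ) :
    pderiv R i (PowerSeries.subst u f) =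
      PowerSeries.subst u (PowerSeries.derivative R f) * pderiv R i u := by
  have := pderiv_subst (a := fun _ : Unit => u) (fun _ => hu) f i
  rwa [Fintype.sum_unique] at this

theorem pderiv_subst_fin2 {A B : MvPowerSeries σ R} (hA : constantCoeff A = 0)
    (hB : constantCoeff B = 0) (G : MvPowerSeries (Fin 2) R) (i : σ) :
    pderiv R i (subst ![A, B] G) =
      subst ![A, B] (pderiv R 0 G) * pderiv R i A +
        subst ![A, B] (pderiv R 1 G) * pderiv R i B := by
  rw [pderiv_subst (Fin.forall_fin_two.2 ⟨hA, hB⟩), Fin.sum_univ_two]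
  rfl

theorem subst_comp_subst_fin2 {A B : MvPowerSeries σ R} (hA : constantCoeff A = 0)
    (hB : constantCoeff B = 0) {b : σ → MvPowerSeries τ R} (hb : HasSubst b)
    (G : MvPowerSeries (Fin 2) R) :
    subst b (subst ![A, B] G) = subst ![subst b A, subst b B] G := by
  rw [subst_comp_subst_apply (hasSubst_fin2 hA hB) hb]
  congr 1
  funext s
  fin_cases s <;> rfl

theorem subst_comp_powerSeriesSubst {u : MvPowerSeries σ R} (hu : constantCoeff u = 0)
    {b : σ → MvPowerSeries τ R} (hb : HasSubst b) (f : PowerSeries R) :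
    subst b (PowerSeries.subst u f) = PowerSeries.subst (subst b u) f :=
  subst_comp_subst_apply (PowerSeries.HasSubst.of_constantCoeff_zero hu).const hb f

theorem hasSubst_piSingle [DecidableEq σ] [Finite σ] (i : σ) {A : MvPowerSeries τ R}
    (hA : constantCoeff A = 0) : HasSubst (Pi.single i A) :=
  hasSubst_of_constantCoeff_zero fun s => by
    by_cases h : s = i
    · subst h; rwa [Pi.single_eq_same]
    · rw [Pi.single_eq_of_ne h, map_zero]

theorem subst_comp_subst_piSingle [DecidableEq σ] [Finite σ] (i : σ) {υ : Type*}
    {A : MvPowerSeries τ R} (hA : constantCoeff A = 0) {b : τ → MvPowerSeries υ R}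
    (hb : HasSubst b) (G : MvPowerSeries σ R) :
    subst b (subst (Pi.single i A) G) = subst (Pi.single i (subst b A)) G := by
  rw [subst_comp_subst_apply (hasSubst_piSingle i hA) hb]
  congr 1
  funext s
  by_cases h : s = i
  · subst h; rw [Pi.single_eq_same, Pi.single_eq_same]
  · rw [Pi.single_eq_of_ne h, Pi.single_eq_of_ne h, ← coe_substAlgHom hb, map_zero]

theorem coeff_subst_piSingle_X [DecidableEq σ] [Finite σ] (i : σ) (G : MvPowerSeries σ R)
    (n : ℕ) :
    PowerSeries.coeff n (subst (Pi.single i PowerSeries.X) G) = coeff (Finsupp.single i n) G := by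
  rw [PowerSeries.coeff, coeff_subst (hasSubst_piSingle i (PowerSeries.constantCoeff_X (R := R))),
    finsum_eq_single _ (Finsupp.single i n)]
  · simp [Finsupp.prod_single_index]
  · intro m hm
    by_cases hmi : m = Finsupp.single i (m i)
    · rw [hmi, Finsupp.prod_single_index (by simp), Pi.single_eq_same]
      change _ • PowerSeries.coeff n (PowerSeries.X ^ m i) = 0
      rw [PowerSeries.coeff_X_pow, if_neg, smul_zero]
      rintro rfl
      exact hm hmi
    · obtain ⟨s, hsi, hs⟩ : ∃ s, s ≠ i ∧ m s ≠ 0 := by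
        by_contra! h
        refine hmi (Finsupp.ext fun s => ?_)
        by_cases hsi : s = i
        · rw [hsi, Finsupp.single_eq_same]
        · rw [h s hsi, Finsupp.single_eq_of_ne hsi]
      rw [Finsupp.prod, Finset.prod_eq_zero (Finsupp.mem_support_iff.2 hs), map_zero, smul_zero]
      rw [Pi.single_eq_of_ne hsi, zero_pow hs]

theorem subst_X_X_fin2 (G : MvPowerSeries (Fin 2) R) : subst ![X 0, X 1] G = G := by
  have : ![X 0, X 1] = (X : Fin 2 → MvPowerSeries (Fin 2) R) := by
    funext s; fin_cases s <;> rfl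
  rw [this, subst_self, id]

theorem eq_of_pderiv_zero_eq_of_restrict_eq [IsAddTorsionFree R] {G H : MvPowerSeries (Fin 2) R}
    (h0 : pderiv R 0 G = pderiv R 0 H)
    (h1 : (subst (Pi.single 1 PowerSeries.X) G : PowerSeries R) =
      subst (Pi.single 1 PowerSeries.X) H) : G = H := by
  ext d
  rcases hk : d 0 with _ | k
  · have hd' : d = Finsupp.single 1 (d 1) := by
      ext s; fin_cases s
      · simpa using hk
      · simp
    have := congrArg (PowerSeries.coeff (d 1)) h1
    rwa [coeff_subst_piSingle_X, coeff_subst_piSingle_X, ← hd'] at this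
  · have hde : d - Finsupp.single 0 1 + Finsupp.single 0 1 = d := by
      ext s; fin_cases s
      · simp [hk]
      · simp
    have := congrArg (coeff (d - Finsupp.single 0 1)) h0
    rw [coeff_pderiv, coeff_pderiv, hde, Finsupp.tsub_apply, hk, Finsupp.single_eq_same,
      Nat.add_sub_cancel, ← Nat.cast_succ, mul_comm, ← nsmul_eq_mul, mul_comm, ← nsmul_eq_mul,
      smul_right_inj k.succ_ne_zero] at this
    exact this

end MvPowerSeries

namespace PowerSeries

variable [Algebra ℚ R]

/-- At `n = 0` the factor `(0 : ℚ)⁻¹ = 0` makes the constant term vanish. -/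
def antideriv (g : PowerSeries R) : PowerSeries R :=
  mk fun n => algebraMap ℚ R (n : ℚ)⁻¹ * coeff (n - 1) g

theorem constantCoeff_antideriv (g : PowerSeries R) : constantCoeff (antideriv g) = 0 := by
  rw [← coeff_zero_eq_constantCoeff_apply, antideriv, coeff_mk]
  simp

theorem derivative_antideriv (g : PowerSeries R) : derivative R (antideriv g) = g := by
  ext n
  rw [coeff_derivative, antideriv, coeff_mk, Nat.add_sub_cancel, mul_comm, ← mul_assoc]
  rw [show (n + 1 : R) = algebraMap ℚ R (n + 1 : ℕ) by simp, ← map_mul,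
    mul_inv_cancel₀ (Nat.cast_ne_zero.2 n.succ_ne_zero), map_one, one_mul]

end PowerSeries

section Substitution

open MvPowerSeries

theorem wt_eq_degree (d : σ →₀ ℕ) : wt d = d.degree := rfl

theorem coeff_mvmk (g : (σ →₀ ℕ) → R) (d : σ →₀ ℕ) : MvPowerSeries.coeff d (mvmk g) = g d := rfl

theorem pcompMv_eq_subst (f : PowerSeries R) {u : MvPowerSeries σ R}
    (hu : constantCoeff u = 0) : pcompMv f u = PowerSeries.subst u f := by
  ext d
  rw [PowerSeries.coeff_subst (PowerSeries.HasSubst.of_constantCoeff_zero hu),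
    finsum_eq_sum_of_support_subset (s := Finset.range (wt d + 1))]
  · simp [pcompMv, coeff_mvmk, coeff_C_mul]
  · intro k hk
    by_contra hkd
    refine hk ?_
    simp only [Finset.coe_range, Set.mem_Iio, not_lt] at hkd
    have := coeff_pow_mul_pow_eq_zero (j := 0) hu hu (d := d) (i := k)
      (by rw [← wt_eq_degree]; omega)
    simp_all

theorem toMv_eq_subst (i : Fin 2) (f : PowerSeries R) :
    toMv i f = PowerSeries.subst (X i) f := by
  ext d
  rw [PowerSeries.coeff_subst_single]
  rfl

theorem subst2_eq_subst (G : MvPowerSeries (Fin 2) R) {A B : MvPowerSeries σ R}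
    (hA : constantCoeff A = 0) (hB : constantCoeff B = 0) :
    subst2 G A B = subst ![A, B] G := by
  ext d
  set box := Finset.range (wt d + 1) ×ˢ Finset.range (wt d + 1)
  set e : ℕ × ℕ → Fin 2 →₀ ℕ := fun p => Finsupp.single 0 p.1 + Finsupp.single 1 p.2
  have he : ∀ p, e p 0 = p.1 ∧ e p 1 = p.2 := fun p => by simp [e]
  have hprod : ∀ m : Fin 2 →₀ ℕ, (m.prod fun s k => ![A, B] s ^ k) = A ^ m 0 * B ^ m 1 := by
    intro m
    rw [Finsupp.prod_fintype _ _ (by simp), Fin.prod_univ_two]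
    rfl
  rw [coeff_subst (hasSubst_fin2 hA hB), finsum_eq_sum_of_support_subset (s := box.image e),
    Finset.sum_image]
  · simp only [subst2, coeff_mvmk, map_sum, mul_assoc, coeff_C_mul, hprod, he, smul_eq_mul]
    rfl
  · intro p _ q _ hpq
    have h0 := congrArg (· 0) hpq
    have h1 := congrArg (· 1) hpq
    simp only [he] at h0 h1
    exact Prod.ext h0 h1
  · intro m hm
    rw [Function.mem_support, hprod] at hm
    have hd : m 0 + m 1 ≤ wt d := by
      by_contra hc
      exact hm (by rw [coeff_pow_mul_pow_eq_zero hA hB (by rw [← wt_eq_degree]; omega), smul_zero])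
    refine Finset.mem_coe.2 (Finset.mem_image.2 ⟨(m 0, m 1), ?_, ?_⟩)
    · simp only [box, Finset.mem_product, Finset.mem_range]
      omega
    · ext s
      fin_cases s <;> simp [e]

end Substitution

section FormalGroupLaw

open MvPowerSeries

variable {τ : Type*} {F : MvPowerSeries (Fin 2) R}

def Linearizes (F : MvPowerSeries (Fin 2) R) (g : PowerSeries R) : Prop :=
  PowerSeries.subst F g = PowerSeries.subst (X 0 : MvPowerSeries (Fin 2) R) g +
    PowerSeries.subst (X 1) g

theorem IsFGL.constantCoeff_eq_zero (hF : IsFGL F) : constantCoeff F = 0 := by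
  have := congrArg (coeff 0) hF.1
  rw [subst2, coeff_mvmk] at this
  simpa [wt] using this

theorem IsFGL.constantCoeff_subst (hF : IsFGL F) {A B : MvPowerSeries σ R}
    (hA : constantCoeff A = 0) (hB : constantCoeff B = 0) : constantCoeff (subst ![A, B] F) = 0 :=
  constantCoeff_subst_eq_zero (hasSubst_fin2 hA hB) (Fin.forall_fin_two.2 ⟨hA, hB⟩)
    hF.constantCoeff_eq_zero

theorem IsFGL.assoc (hF : IsFGL F) :
    subst ![X 0, subst ![X 1, X 2] F] F =
      (subst ![subst ![X 0, X 1] F, X 2] F : MvPowerSeries (Fin 3) R) := by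
  have h12 := hF.constantCoeff_subst (constantCoeff_X (1 : Fin 3)) (constantCoeff_X 2)
  have h01 := hF.constantCoeff_subst (constantCoeff_X (0 : Fin 3)) (constantCoeff_X 1)
  have := hF.2.2
  rwa [subst2_eq_subst _ (constantCoeff_X 1) (constantCoeff_X 2),
    subst2_eq_subst _ (constantCoeff_X 0) (constantCoeff_X 1),
    subst2_eq_subst _ (constantCoeff_X 0) h12, subst2_eq_subst _ h01 (constantCoeff_X 2)] at this

theorem IsFGL.subst_single (hF : IsFGL F) (i : Fin 2) {B : MvPowerSeries τ R}
    (hB : constantCoeff B = 0) : subst (Pi.single i B) F = B := by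
  have hX : subst (Pi.single i (X i)) F = (X i : MvPowerSeries (Fin 2) R) := by
    fin_cases i
    · show subst (Pi.single 0 (X 0)) F = X 0
      rw [Pi.single_zero_fin2, ← subst2_eq_subst _ (constantCoeff_X 0) (map_zero _)]
      exact hF.1
    · show subst (Pi.single 1 (X 1)) F = X 1
      rw [Pi.single_one_fin2, ← subst2_eq_subst _ (map_zero _) (constantCoeff_X 1)]
      exact hF.2.1
  have hb := hasSubst_piSingle i hB
  have := congrArg (subst (Pi.single i B)) hX
  rwa [subst_comp_subst_piSingle i (constantCoeff_X i) hb, subst_X hb, Pi.single_eq_same] at this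

/-- `F_x(0, t)`; the invariant differential of `F` is `dt / F_x(0, t)`. -/
def invariantDenom (F : MvPowerSeries (Fin 2) R) : PowerSeries R :=
  subst (Pi.single 1 PowerSeries.X) (pderiv R 0 F)

theorem powerSeriesSubst_invariantDenom {B : MvPowerSeries σ R} (hB : constantCoeff B = 0) :
    PowerSeries.subst B (invariantDenom F) = subst (Pi.single 1 B) (pderiv R 0 F) := by
  have hB' := PowerSeries.HasSubst.of_constantCoeff_zero hB
  rw [invariantDenom, PowerSeries.subst,
    subst_comp_subst_piSingle 1 (PowerSeries.constantCoeff_X (R := R)) hB'.const]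
  congr 2
  exact PowerSeries.subst_X hB'

theorem IsFGL.subst_invariantDenom (hF : IsFGL F) :
    PowerSeries.subst F (invariantDenom F) =
      pderiv R 0 F * PowerSeries.subst (X 0 : MvPowerSeries (Fin 2) R) (invariantDenom F) := by
  -- Differentiate `F(u, F(x, y)) = F(F(u, x), y)` in `u`, then put `u = 0` by substituting `ρ`.
  have c : ∀ i : Fin 3, constantCoeff (X i : MvPowerSeries (Fin 3) R) = 0 := constantCoeff_X
  have hW := hF.constantCoeff_subst (c 1) (c 2)
  have hU := hF.constantCoeff_subst (c 0) (c 1)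
  set ρ : Fin 3 → MvPowerSeries (Fin 2) R := ![0, X 0, X 1]
  have hρ : HasSubst ρ := hasSubst_of_constantCoeff_zero fun s => by fin_cases s <;> simp [ρ]
  have h := congrArg (fun G => subst ρ (pderiv R 0 G)) hF.assoc
  simp only [pderiv_subst_fin2 (c 0) hW, pderiv_subst_fin2 hU (c 2),
    pderiv_subst_fin2 (c 1) (c 2), pderiv_subst_fin2 (c 0) (c 1), pderiv_X_self,
    pderiv_X_of_ne (show (1 : Fin 3) ≠ 0 by decide),
    pderiv_X_of_ne (show (2 : Fin 3) ≠ 0 by decide), mul_one, mul_zero, add_zero] at h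
  rw [subst_mul hρ, subst_comp_subst_fin2 (c 0) hW hρ, subst_comp_subst_fin2 hU (c 2) hρ,
    subst_comp_subst_fin2 (c 0) (c 1) hρ, subst_comp_subst_fin2 (c 1) (c 2) hρ,
    subst_comp_subst_fin2 (c 0) (c 1) hρ] at h
  simp only [subst_X hρ, ρ, Matrix.cons_val_zero, Matrix.cons_val_one, Matrix.cons_val_two,
    Matrix.head_cons, Matrix.tail_cons] at h
  simp only [← Pi.single_one_fin2] at h
  rwa [subst_X_X_fin2, hF.subst_single 1 (constantCoeff_X 0), subst_X_X_fin2,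
    ← powerSeriesSubst_invariantDenom hF.constantCoeff_eq_zero,
    ← powerSeriesSubst_invariantDenom (constantCoeff_X 0)] at h

theorem IsFGL.constantCoeff_invariantDenom (hF : IsFGL F) :
    PowerSeries.constantCoeff (invariantDenom F) = 1 := by
  rw [← PowerSeries.coeff_zero_eq_constantCoeff_apply, invariantDenom, coeff_subst_piSingle_X,
    Finsupp.single_zero, coeff_pderiv, zero_add, ← coeff_subst_piSingle_X,
    hF.subst_single 0 (PowerSeries.constantCoeff_X (R := R))]
  simp

theorem IsFGL.isUnit_invariantDenom (hF : IsFGL F) : IsUnit (invariantDenom F) :=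
  PowerSeries.isUnit_iff_constantCoeff.2 (by rw [hF.constantCoeff_invariantDenom]; exact isUnit_one)

theorem IsFGL.derivative_mul_invariantDenom (hF : IsFGL F) {g : PowerSeries R}
    (hg : Linearizes F g) :
    PowerSeries.derivative R g * invariantDenom F = PowerSeries.C (PowerSeries.coeff 1 g) := by
  -- Differentiate in `x`, then put `x = 0`.
  have hF0 := hF.constantCoeff_eq_zero
  have hρ := hasSubst_piSingle (1 : Fin 2) (PowerSeries.constantCoeff_X (R := R))
  have h := congrArg
    (fun G => (subst (Pi.single 1 PowerSeries.X) (pderiv R 0 G) : PowerSeries R)) hg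
  simp only [map_add, pderiv_powerSeriesSubst hF0, pderiv_powerSeriesSubst (constantCoeff_X _),
    pderiv_X_self, pderiv_X_of_ne (show (1 : Fin 2) ≠ 0 by decide), mul_one, mul_zero,
    add_zero] at h
  rw [subst_mul hρ, subst_comp_powerSeriesSubst hF0 hρ,
    subst_comp_powerSeriesSubst (constantCoeff_X 0) hρ, subst_X hρ,
    Pi.single_eq_of_ne (by decide),
    hF.subst_single 1 (PowerSeries.constantCoeff_X (R := R)), PowerSeries.X_subst,
    PowerSeries.subst_zero_eq_C_constantCoeff] at h
  rw [Algebra.algebraMap_self, map_id, RingHom.id_apply,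
    ← PowerSeries.coeff_zero_eq_constantCoeff_apply, PowerSeries.coeff_derivative] at h
  simp only [zero_add, Nat.cast_zero, mul_one] at h
  exact h

variable [Algebra ℚ R]

def logOf (F : MvPowerSeries (Fin 2) R) : PowerSeries R :=
  PowerSeries.antideriv (Ring.inverse (invariantDenom F))

theorem IsFGL.coeff_one_logOf (hF : IsFGL F) : PowerSeries.coeff 1 (logOf F) = 1 := by
  have h := congrArg PowerSeries.constantCoeff (Ring.inverse_mul_cancel _ hF.isUnit_invariantDenom)
  rw [map_mul, hF.constantCoeff_invariantDenom, mul_one, map_one] at h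
  simp [logOf, PowerSeries.antideriv, h]

theorem IsFGL.linearizes_logOf (hF : IsFGL F) : Linearizes F (logOf F) := by
  have : IsAddTorsionFree R := .of_module_rat R
  have hF0 := hF.constantCoeff_eq_zero
  have hX : ∀ i : Fin 2, constantCoeff (X i : MvPowerSeries (Fin 2) R) = 0 := constantCoeff_X
  have hρ := hasSubst_piSingle (1 : Fin 2) (PowerSeries.constantCoeff_X (R := R))
  set v := invariantDenom F
  set w := Ring.inverse v
  have hwv : ∀ {u : MvPowerSeries (Fin 2) R}, constantCoeff u = 0 →
      PowerSeries.subst u w * PowerSeries.subst u v = 1 := fun hu => by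
    rw [← PowerSeries.subst_mul (PowerSeries.HasSubst.of_constantCoeff_zero hu),
      Ring.inverse_mul_cancel _ hF.isUnit_invariantDenom,
      ← PowerSeries.coe_substAlgHom (PowerSeries.HasSubst.of_constantCoeff_zero hu), map_one]
  -- Both sides have `x`-derivative `w(x)` and agree at `x = 0`.
  refine eq_of_pderiv_zero_eq_of_restrict_eq ?_ ?_
  · rw [map_add, pderiv_powerSeriesSubst hF0, pderiv_powerSeriesSubst (hX 0),
      pderiv_powerSeriesSubst (hX 1), logOf, PowerSeries.derivative_antideriv, pderiv_X_self,
      pderiv_X_of_ne (show (1 : Fin 2) ≠ 0 by decide), mul_one, mul_zero, add_zero]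
    calc PowerSeries.subst F w * pderiv R 0 F
        = PowerSeries.subst F w * pderiv R 0 F * (PowerSeries.subst (X 0) w *
            PowerSeries.subst (X 0) v) := by rw [hwv (hX 0), mul_one]
      _ = PowerSeries.subst F w * (pderiv R 0 F * PowerSeries.subst (X 0) v) *
            PowerSeries.subst (X 0) w := by ring
      _ = PowerSeries.subst (X 0) w := by rw [← hF.subst_invariantDenom, hwv hF0, one_mul]
  · rw [subst_add hρ, subst_comp_powerSeriesSubst hF0 hρ, subst_comp_powerSeriesSubst (hX 0) hρ,
      subst_comp_powerSeriesSubst (hX 1) hρ, subst_X hρ, subst_X hρ, Pi.single_eq_same,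
      Pi.single_eq_of_ne (show (0 : Fin 2) ≠ 1 by decide),
      hF.subst_single 1 (PowerSeries.constantCoeff_X (R := R)), PowerSeries.X_subst, logOf,
      PowerSeries.subst_zero_of_constantCoeff_zero (PowerSeries.constantCoeff_antideriv _),
      zero_add]

theorem IsFGL.eq_logOf (hF : IsFGL F) {g : PowerSeries R} (hg0 : PowerSeries.constantCoeff g = 0)
    (hg1 : PowerSeries.coeff 1 g = 1) (hg : Linearizes F g) : g = logOf F := by
  have : IsAddTorsionFree R := .of_module_rat R
  refine PowerSeries.derivative.ext ?_ (by rw [hg0, logOf, PowerSeries.constantCoeff_antideriv])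
  have h := hF.derivative_mul_invariantDenom hg
  rw [hg1, map_one] at h
  rw [logOf, PowerSeries.derivative_antideriv, ← one_mul (Ring.inverse _),
    Ring.eq_mul_inverse_iff_mul_eq _ _ _ hF.isUnit_invariantDenom]
  exact h

end FormalGroupLaw

namespace VFA

theorem statement2 {R : Type*} [CommRing R] [Algebra ℚ R]
    (F : MvPowerSeries (Fin 2) R) (hF : IsFGL F) :
    ∃! f : PowerSeries R,
      PowerSeries.constantCoeff f = 0 ∧ PowerSeries.coeff 1 f = 1 ∧
        pcompMv f F = toMv 0 f + toMv 1 f := by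
  have hlin : ∀ g : PowerSeries R, pcompMv g F = toMv 0 g + toMv 1 g ↔ Linearizes F g := fun g => by
    rw [pcompMv_eq_subst g hF.constantCoeff_eq_zero, toMv_eq_subst, toMv_eq_subst, Linearizes]
  refine ⟨logOf F, ⟨PowerSeries.constantCoeff_antideriv _, hF.coeff_one_logOf,
    (hlin _).2 hF.linearizes_logOf⟩, fun g ⟨hg0, hg1, hg⟩ => hF.eq_logOf hg0 hg1 ((hlin g).1 hg)⟩

end VFA
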